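/- For all words u, v, w over a nonempty finite alphabet A, if w is an interleaving (shuffle) of u and v, then h(w) ≤ h(u) + |v|, where |v| is the length of v. -/

import Mathlib

/-!
By induction on `|v|`, it suffices to show that if `p q` is alone in its `∼ₖ`-class, then `p b q`
is alone in its `∼ₖ₊₁`-class. If some `x ≠ p b q` had `x ∼ₖ₊₁ p b q`, then already a word `z` at
edit distance one from `p b q` would (compare `x` and `p b q` at their first difference). Such a `z`
is `p q`, `p b q'` or `p' b q`, and a common letter cancels at the cost of one level,
`x b s ∼ₖ₊₁ x b t → x s ∼ₖ x t` (induction on `x` via the first-occurrence recursion for `∼ₖ₊₁`).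
This produces a word of a different length `∼ₖ`-equivalent to `p q`.
-/

/-- Simon's congruence of order `k`: `u` and `v` have the same subwords
(subsequences) of length at most `k`. -/
def SimonCong {A : Type*} (k : ℕ) (u v : List A) : Prop :=
  ∀ s : List A, s.length ≤ k → (s.Sublist u ↔ s.Sublist v)

/-- The subword distance `δ(u,v) = sup {k | u ∼ₖ v} ∈ ℕ ∪ {∞}`. -/
noncomputable def delta {A : Type*} (u v : List A) : ℕ∞ :=
  ⨆ k ∈ {k : ℕ | SimonCong k u v}, (k : ℕ∞)

/-- Right side distance `r(u,t) = δ(u, u·t)`. -/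
noncomputable def sideR {A : Type*} (u t : List A) : ℕ∞ :=
  delta u (u ++ t)

/-- Left side distance `ℓ(t,u) = δ(t·u, u)`. -/
noncomputable def sideL {A : Type*} (t u : List A) : ℕ∞ :=
  delta (t ++ u) u

/-- The piecewise complexity `h(u)`: the least `n` such that every word
`v` with `u ∼ₙ v` equals `u`. -/
noncomputable def pieceH {A : Type*} (u : List A) : ℕ :=
  sInf {n : ℕ | ∀ v : List A, SimonCong n u v → v = u}

/-- A word `u` is `m`-reduced if no strict subword of `u` is `∼ₘ`-equivalent to `u`. -/
def MReduced {A : Type*} (m : ℕ) (u : List A) : Prop :=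
  ∀ u' : List A, u'.Sublist u → u' ≠ u → ¬ SimonCong m u' u

/-- The piecewise minimality index `ρ(u)`: the least `m` such that `u` is `m`-reduced. -/
noncomputable def rho {A : Type*} (u : List A) : ℕ :=
  sInf {m : ℕ | MReduced m u}

/-- `IsShuffle u v w` holds when `w` is an interleaving (shuffle) of `u` and `v`. -/
inductive IsShuffle {A : Type*} : List A → List A → List A → Prop
  | nil : IsShuffle [] [] []
  | left (a : A) {u v w : List A} : IsShuffle u v w → IsShuffle (a :: u) v (a :: w)
  | right (a : A) {u v w : List A} : IsShuffle u v w → IsShuffle u (a :: v) (a :: w)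

open List

section

variable {A : Type*}

namespace SimonCong

theorem symm {k : ℕ} {u v : List A} (h : SimonCong k u v) : SimonCong k v u :=
  fun s hs => (h s hs).symm

theorem trans {k : ℕ} {u v w : List A} (h₁ : SimonCong k u v) (h₂ : SimonCong k v w) :
    SimonCong k u w :=
  fun s hs => (h₁ s hs).trans (h₂ s hs)

theorem mono {k m : ℕ} {u v : List A} (h : SimonCong m u v) (hk : k ≤ m) : SimonCong k u v :=
  fun s hs => h s (hs.trans hk)

theorem zero (u v : List A) : SimonCong 0 u v := fun s hs => by
  rw [eq_nil_of_length_eq_zero (Nat.le_zero.mp hs)]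
  simp

theorem reverse {k : ℕ} {u v : List A} (h : SimonCong k u v) :
    SimonCong k u.reverse v.reverse := fun s hs => by
  rw [sublist_reverse_iff, sublist_reverse_iff]
  exact h _ (by simpa using hs)

theorem of_sublist_of_sublist {k : ℕ} {x z w : List A} (hxz : x <+ z) (hzw : z <+ w)
    (h : SimonCong k x w) : SimonCong k z w :=
  fun s hs => ⟨fun hsz => hsz.trans hzw, fun hsw => ((h s hs).mpr hsw).trans hxz⟩

end SimonCong

section AfterFirst

variable [DecidableEq A]

def afterFirst (e : A) : List A → List A
  | [] => []
  | a :: l => if a = e then l else afterFirst e l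

@[simp] theorem afterFirst_cons_self (e : A) (l : List A) : afterFirst e (e :: l) = l := by
  simp [afterFirst]

theorem afterFirst_cons_of_ne {e a : A} (l : List A) (h : a ≠ e) :
    afterFirst e (a :: l) = afterFirst e l := by
  simp [afterFirst, h]

theorem afterFirst_append_of_mem {e : A} {l : List A} (r : List A) (h : e ∈ l) :
    afterFirst e (l ++ r) = afterFirst e l ++ r := by
  induction l with
  | nil => simp at h
  | cons a l ih =>
    by_cases hae : a = e
    · subst hae; simp
    · rw [cons_append, afterFirst_cons_of_ne _ hae, afterFirst_cons_of_ne _ hae]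
      exact ih (by simpa [Ne.symm hae] using h)

theorem afterFirst_append_of_not_mem {e : A} {l : List A} (r : List A) (h : e ∉ l) :
    afterFirst e (l ++ r) = afterFirst e r := by
  induction l with
  | nil => rfl
  | cons a l ih =>
    rw [cons_append, afterFirst_cons_of_ne _ (by rintro rfl; simp at h)]
    exact ih (by simp_all)

theorem length_afterFirst_lt {e : A} {l : List A} (h : e ∈ l) :
    (afterFirst e l).length < l.length := by
  induction l with
  | nil => simp at h
  | cons a l ih =>
    by_cases hae : a = e
    · subst hae; simp
    · rw [afterFirst_cons_of_ne _ hae]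
      exact (ih (by simpa [Ne.symm hae] using h)).trans (by simp)

theorem cons_sublist_iff_afterFirst {e : A} {s u : List A} :
    e :: s <+ u ↔ e ∈ u ∧ s <+ afterFirst e u := by
  induction u with
  | nil => simp
  | cons a l ih =>
    by_cases hae : a = e
    · subst hae; simp
    · rw [afterFirst_cons_of_ne _ hae, mem_cons]
      simp only [Ne.symm hae, false_or, ← ih]
      exact ⟨(·.of_cons_of_ne (Ne.symm hae)), (·.cons a)⟩

theorem simonCong_succ_iff {k : ℕ} {u v : List A} :
    SimonCong (k + 1) u v ↔
      (∀ e, e ∈ u ↔ e ∈ v) ∧ ∀ e ∈ u, SimonCong k (afterFirst e u) (afterFirst e v) := by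
  constructor
  · intro h
    have hmem : ∀ e, e ∈ u ↔ e ∈ v := fun e => by
      simpa [singleton_sublist] using h [e] (by simp)
    refine ⟨hmem, fun e he s hs => ?_⟩
    simpa [cons_sublist_iff_afterFirst, he, (hmem e).mp he] using h (e :: s) (by simpa using hs)
  · rintro ⟨hmem, hafter⟩ (_ | ⟨e, s⟩) hs
    · simp
    · by_cases he : e ∈ u
      · simp [cons_sublist_iff_afterFirst, he, (hmem e).mp he, hafter e he s (by simpa using hs)]
      · simp [cons_sublist_iff_afterFirst, he, (hmem e).not.mp he]

end AfterFirst

theorem mem_append_of_pair_sublist {a b : A} {L R : List A} (h : [b, a] <+ L ++ b :: R) :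
    a ∈ L ++ R := by
  classical
  by_cases hab : a = b
  · subst hab
    have := h.count_le a
    simp only [count_cons_self, count_append] at this
    rw [mem_append, ← count_pos_iff, ← count_pos_iff]
    omega
  · simpa [hab] using h.subset (by simp : a ∈ [b, a])

theorem SimonCong.mem_of_append_cons {k : ℕ} {x s t : List A} {b e : A}
    (h : SimonCong (k + 2) (x ++ b :: s) (x ++ b :: t)) (he : e ∈ x ++ s) : e ∈ x ++ t := by
  rcases mem_append.mp he with hex | hes
  · exact mem_append_left t hex
  · have hpair : [b, e] <+ x ++ b :: s :=
      (cons_sublist_cons.mpr (singleton_sublist.mpr hes)).trans (sublist_append_right x _)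
    exact mem_append_of_pair_sublist ((h _ (by simp)).mp hpair)

theorem SimonCong.cancel_left [DecidableEq A] : ∀ {k : ℕ} (x : List A) {b : A} {s t : List A},
    SimonCong (k + 1) (x ++ b :: s) (x ++ b :: t) → SimonCong k (x ++ s) (x ++ t)
  | 0, _, _, _, _, _ => SimonCong.zero _ _
  | k + 1, x, b, s, t, h => by
    refine simonCong_succ_iff.mpr ⟨fun e => ⟨h.mem_of_append_cons, h.symm.mem_of_append_cons⟩,
      fun e he => ?_⟩
    have hafter := (simonCong_succ_iff.mp h).2 e <| by
      simp only [mem_append, mem_cons] at he ⊢; tauto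
    by_cases hex : e ∈ x
    · rw [afterFirst_append_of_mem _ hex, afterFirst_append_of_mem _ hex] at hafter ⊢
      exact cancel_left (afterFirst e x) hafter
    · rw [afterFirst_append_of_not_mem _ hex, afterFirst_append_of_not_mem _ hex] at hafter ⊢
      by_cases heb : b = e
      · subst heb
        simp only [afterFirst_cons_self] at hafter
        exact (simonCong_succ_iff.mp hafter).2 b (by simpa [hex] using he)
      · rw [afterFirst_cons_of_ne _ heb, afterFirst_cons_of_ne _ heb] at hafter
        exact hafter.mono k.le_succ
termination_by _ x => x.length
decreasing_by exact length_afterFirst_lt hex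

theorem SimonCong.cancel_right [DecidableEq A] {k : ℕ} {s t : List A} {b : A} (y : List A)
    (h : SimonCong (k + 1) (s ++ b :: y) (t ++ b :: y)) : SimonCong k (s ++ y) (t ++ y) := by
  have h' : SimonCong (k + 1) (y.reverse ++ b :: s.reverse) (y.reverse ++ b :: t.reverse) := by
    simpa using h.reverse
  simpa using (h'.cancel_left y.reverse).reverse

def IsOneDeletion (u v : List A) : Prop :=
  ∃ (P Q : List A) (e : A), u = P ++ e :: Q ∧ v = P ++ Q

theorem IsOneDeletion.length_eq {u v : List A} (h : IsOneDeletion u v) :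
    u.length = v.length + 1 := by
  obtain ⟨P, Q, e, rfl, rfl⟩ := h
  simp only [length_append, length_cons]; omega

theorem IsOneDeletion.sublist {u v : List A} (h : IsOneDeletion u v) : v <+ u := by
  obtain ⟨P, Q, e, rfl, rfl⟩ := h
  exact (sublist_cons_self e Q).append_left P

theorem exists_deletion_between_of_sublist {x w : List A} (h : x <+ w) (hne : x ≠ w) :
    ∃ z, IsOneDeletion w z ∧ x <+ z := by
  induction h with
  | slnil => exact absurd rfl hne
  | @cons l₁ l₂ b h _ => exact ⟨l₂, ⟨[], l₂, b, rfl, rfl⟩, h⟩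
  | @cons_cons l₁ l₂ b _ ih =>
    obtain ⟨z, ⟨P, Q, e, rfl, rfl⟩, hxz⟩ := ih (by rintro rfl; exact hne rfl)
    exact ⟨b :: (P ++ Q), ⟨b :: P, Q, e, rfl, rfl⟩, hxz.cons_cons b⟩

theorem exists_insertion_between_of_sublist {w x : List A} (h : w <+ x) (hne : w ≠ x) :
    ∃ z, IsOneDeletion z w ∧ z <+ x := by
  induction h with
  | slnil => exact absurd rfl hne
  | @cons l₁ l₂ b h _ => exact ⟨b :: l₁, ⟨[], l₁, b, rfl, rfl⟩, h.cons_cons b⟩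
  | @cons_cons l₁ l₂ b _ ih =>
    obtain ⟨z, ⟨P, Q, e, rfl, rfl⟩, hzx⟩ := ih (by rintro rfl; exact hne rfl)
    exact ⟨b :: (P ++ e :: Q), ⟨b :: P, Q, e, rfl, rfl⟩, hzx.cons_cons b⟩

theorem prefix_or_prefix_or_exists_ne (x w : List A) : x <+: w ∨ w <+: x ∨
    ∃ (p x₁ w₁ : List A) (c d : A), c ≠ d ∧ x = p ++ c :: x₁ ∧ w = p ++ d :: w₁ := by
  induction x generalizing w with
  | nil => exact Or.inl nil_prefix
  | cons a x ih =>
    rcases w with _ | ⟨b, w⟩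
    · exact Or.inr (Or.inl nil_prefix)
    by_cases hab : a = b
    · subst hab
      rcases ih w with h | h | ⟨p, x₁, w₁, c, d, hcd, rfl, rfl⟩
      · exact Or.inl (cons_prefix_cons.mpr ⟨rfl, h⟩)
      · exact Or.inr (Or.inl (cons_prefix_cons.mpr ⟨rfl, h⟩))
      · exact Or.inr (Or.inr ⟨a :: p, x₁, w₁, c, d, hcd, rfl, rfl⟩)
    · exact Or.inr (Or.inr ⟨[], x, w, a, b, hab, rfl, rfl⟩)

theorem cons_sublist_of_append_sublist_append {p u α β : List A} {g : A}
    (hαg : ¬ α ++ [g] <+ p) (h : α ++ g :: β <+ p ++ u) : g :: β <+ u := by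
  obtain ⟨t₁, t₂, heq, ht₁, ht₂⟩ := sublist_append_iff.mp h
  rcases append_eq_append_iff.mp heq with ⟨as, rfl, has⟩ | ⟨bs, rfl, rfl⟩
  · rcases cons_eq_append_iff.mp has with ⟨rfl, rfl⟩ | ⟨as', rfl, rfl⟩
    · exact ht₂
    · exact absurd ((by simp : α ++ [g] <+ α ++ g :: as').trans ht₁) hαg
  · exact (sublist_append_right bs _).trans ht₂

theorem SimonCong.cons_sublist_of_cons_sublist {N : ℕ} {p u u' α β : List A} {g : A}
    (h : SimonCong N (p ++ u) (p ++ u')) (hα : α <+ p) (hαg : ¬ α ++ [g] <+ p)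
    (hlen : α.length + β.length + 1 ≤ N) (hu : g :: β <+ u) : g :: β <+ u' :=
  have hlen' : (α ++ g :: β).length ≤ N := by
    simp only [length_append, length_cons]; omega
  cons_sublist_of_append_sublist_append hαg ((h _ hlen').mp (hα.append hu))

theorem exists_separating_of_not_simonCong {N : ℕ} {p W : List A} {e : A}
    (h : ¬ SimonCong N (p ++ e :: W) (p ++ W)) :
    ∃ α β : List A, α <+ p ∧ β <+ W ∧ ¬ α ++ [e] <+ p ∧ ¬ e :: β <+ W ∧
      α.length + β.length + 1 ≤ N := by
  simp only [SimonCong, not_forall] at h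
  obtain ⟨s, hlen, hiff⟩ := h
  have hsub : p ++ W <+ p ++ e :: W := (sublist_cons_self e W).append_left p
  obtain ⟨hs, hns⟩ : s <+ p ++ e :: W ∧ ¬ s <+ p ++ W := by
    by_cases hsW : s <+ p ++ W
    · exact absurd (iff_of_true (hsW.trans hsub) hsW) hiff
    · exact ⟨not_not.mp fun hs => hiff (iff_of_false hs hsW), hsW⟩
  obtain ⟨α, s₂, rfl, hα, hs₂⟩ := sublist_append_iff.mp hs
  rcases sublist_cons_iff.mp hs₂ with hs₂ | ⟨β, rfl, hβ⟩
  · exact absurd (hα.append hs₂) hns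
  refine ⟨α, β, hα, hβ, fun hc => hns ?_, fun hc => hns (hα.append hc),
    by simp only [length_append, length_cons] at hlen; omega⟩
  simpa using hc.append hβ

theorem SimonCong.insert_or_insert_of_ne {N : ℕ} {p x₁ w₁ : List A} {c d : A} (hcd : c ≠ d)
    (h : SimonCong N (p ++ c :: x₁) (p ++ d :: w₁)) :
    SimonCong N (p ++ c :: d :: w₁) (p ++ d :: w₁) ∨
      SimonCong N (p ++ d :: d :: w₁) (p ++ d :: w₁) := by
  -- crossing the halves of subwords separating each insertion from `p d w₁` would yield a
  -- subword of length at most `N` telling `p c x₁` and `p d w₁` apart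
  by_contra! hcon
  obtain ⟨αc, βc, hαc, hβc, hαc', hβc', hlc⟩ := exists_separating_of_not_simonCong hcon.1
  obtain ⟨αd, βd, hαd, hβd, hαd', hβd', hld⟩ := exists_separating_of_not_simonCong hcon.2
  have hβcx : ¬ βc <+ x₁ := fun hx =>
    hβc' (h.cons_sublist_of_cons_sublist hαc hαc' hlc (cons_sublist_cons.mpr hx))
  obtain ⟨βd', rfl, hβd''⟩ : ∃ r, βd = d :: r ∧ r <+ w₁ := by
    rcases sublist_cons_iff.mp hβd with hw | hr
    · exact absurd (cons_sublist_cons.mpr hw) hβd'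
    · exact hr
  -- the two separating subwords have total length at most `2N`, so one cross combination is short
  rcases (by simp only [length_cons] at hld ⊢; omega :
      αc.length + (d :: βd').length + 1 ≤ N ∨ αd.length + βc.length + 1 ≤ N) with hb | hb
  · have hdx : d :: βd' <+ x₁ := (h.symm.cons_sublist_of_cons_sublist hαd hαd'
      (by simp only [length_cons] at hld ⊢; omega)
      (cons_sublist_cons.mpr hβd'')).of_cons_of_ne hcd.symm
    have hcw := (h.cons_sublist_of_cons_sublist hαc hαc' hb
      (cons_sublist_cons.mpr hdx)).of_cons_of_ne hcd
    exact hβd' (cons_sublist_cons.mpr ((sublist_cons_self c _).trans hcw))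
  · obtain ⟨r, hr, hβcr, hrlen⟩ : ∃ r, r <+ w₁ ∧ βc <+ d :: r ∧ r.length ≤ βc.length := by
      rcases sublist_cons_iff.mp hβc with hw | ⟨r, rfl, hr⟩
      · exact ⟨βc, hw, sublist_cons_self d βc, le_rfl⟩
      · exact ⟨r, hr, Sublist.refl _, by simp⟩
    have hdx := (h.symm.cons_sublist_of_cons_sublist hαd hαd' (by omega)
      (cons_sublist_cons.mpr hr)).of_cons_of_ne hcd.symm
    exact hβcx (hβcr.trans hdx)

theorem SimonCong.exists_isOneDeletion {N : ℕ} {x w : List A} (h : SimonCong N x w)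
    (hne : x ≠ w) : ∃ z, SimonCong N z w ∧ (IsOneDeletion z w ∨ IsOneDeletion w z) := by
  rcases prefix_or_prefix_or_exists_ne x w with hxw | hwx | ⟨p, x₁, w₁, c, d, hcd, rfl, rfl⟩
  · obtain ⟨z, hwz, hxz⟩ := exists_deletion_between_of_sublist hxw.sublist hne
    exact ⟨z, h.of_sublist_of_sublist hxz hwz.sublist, Or.inr hwz⟩
  · obtain ⟨z, hzw, hzx⟩ := exists_insertion_between_of_sublist hwx.sublist hne.symm
    exact ⟨z, (h.symm.of_sublist_of_sublist hzw.sublist hzx).trans h, Or.inl hzw⟩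
  · rcases h.insert_or_insert_of_ne hcd with hz | hz
    · exact ⟨_, hz, Or.inl ⟨p, d :: w₁, c, rfl, rfl⟩⟩
    · exact ⟨_, hz, Or.inl ⟨p, d :: w₁, d, rfl, rfl⟩⟩

theorem eq_or_exists_of_isOneDeletion {z p q : List A} {b : A}
    (h : IsOneDeletion z (p ++ b :: q) ∨ IsOneDeletion (p ++ b :: q) z) :
    z = p ++ q ∨ (∃ q', z = p ++ b :: q') ∨ ∃ p', z = p' ++ b :: q := by
  rcases h with ⟨P, Q, e, rfl, hw⟩ | ⟨P, Q, e, hw, rfl⟩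
  · rcases append_eq_append_iff.mp hw with ⟨m, rfl, hQ⟩ | ⟨m, rfl, rfl⟩
    · rcases cons_eq_append_iff.mp hQ with ⟨rfl, rfl⟩ | ⟨m', rfl, rfl⟩
      · exact Or.inr (Or.inr ⟨p ++ [e], by simp⟩)
      · exact Or.inr (Or.inl ⟨m' ++ e :: Q, by simp⟩)
    · exact Or.inr (Or.inr ⟨P ++ e :: m, by simp⟩)
  · rcases append_eq_append_iff.mp hw with ⟨m, rfl, hQ⟩ | ⟨m, rfl, hQ⟩
    · rcases cons_eq_append_iff.mp hQ with ⟨rfl, hq⟩ | ⟨m', rfl, rfl⟩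
      · obtain ⟨rfl, rfl⟩ := cons_eq_cons.mp hq
        exact Or.inl (by simp)
      · exact Or.inr (Or.inl ⟨m' ++ Q, by simp⟩)
    · rcases cons_eq_append_iff.mp hQ with ⟨rfl, hq⟩ | ⟨m', rfl, rfl⟩
      · obtain ⟨rfl, rfl⟩ := cons_eq_cons.mp hq
        exact Or.inl (by simp)
      · exact Or.inr (Or.inr ⟨P ++ m', by simp⟩)

def SimonSingleton (n : ℕ) (u : List A) : Prop :=
  ∀ v, SimonCong n u v → v = u

theorem SimonSingleton.append_cons {k : ℕ} {p q : List A} (h : SimonSingleton k (p ++ q))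
    (b : A) : SimonSingleton (k + 1) (p ++ b :: q) := by
  classical
  intro x hx
  by_contra hne
  obtain ⟨z, hz, hadj⟩ := hx.symm.exists_isOneDeletion hne
  have hlen : z.length ≠ (p ++ b :: q).length := by
    rcases hadj with hadj | hadj <;> have := hadj.length_eq <;> omega
  rcases eq_or_exists_of_isOneDeletion hadj with rfl | ⟨q', rfl⟩ | ⟨p', rfl⟩
  · simpa using h _ (hz.mono k.le_succ)
  · have := congrArg length (h _ (hz.cancel_left p).symm)
    simp only [length_append, length_cons] at this hlen; omega
  · have := congrArg length (h _ (hz.cancel_right q).symm)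
    simp only [length_append, length_cons] at this hlen; omega

theorem simonSingleton_length_succ (u : List A) : SimonSingleton (u.length + 1) u := by
  intro v hv
  have huv : u <+ v := (hv u (Nat.le_succ _)).mp (Sublist.refl u)
  refine (huv.eq_of_length_le ?_).symm
  by_contra! hlt
  have hsub := (hv _ (by simp)).mpr (take_sublist (u.length + 1) v)
  simpa [length_take, hlt] using hsub.length_le

theorem simonSingleton_pieceH (u : List A) : SimonSingleton (pieceH u) u :=
  Nat.sInf_mem
    (⟨u.length + 1, simonSingleton_length_succ u⟩ : {n | SimonSingleton n u}.Nonempty)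

theorem pieceH_le {n : ℕ} {u : List A} (h : SimonSingleton n u) : pieceH u ≤ n :=
  Nat.sInf_le h

namespace IsShuffle

theorem eq_of_nil_right : ∀ {u w : List A}, IsShuffle u [] w → w = u
  | _, _, nil => rfl
  | _, _, left a h => by rw [eq_of_nil_right h]

theorem exists_of_cons_right : ∀ {u v w : List A} {b : A}, IsShuffle u (b :: v) w →
    ∃ p u' q, u = p ++ u' ∧ w = p ++ b :: q ∧ IsShuffle u' v q
  | _, _, _, _, right b h => ⟨[], _, _, rfl, rfl, h⟩
  | _, _, _, _, left a h => by
    obtain ⟨p, u', q, rfl, rfl, h'⟩ := exists_of_cons_right h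
    exact ⟨a :: p, u', q, rfl, rfl, h'⟩

theorem append_left (p : List A) {u v w : List A} (h : IsShuffle u v w) :
    IsShuffle (p ++ u) v (p ++ w) := by
  induction p with
  | nil => exact h
  | cons a p ih => exact left a ih

theorem simonSingleton_pieceH_add_length {u v w : List A} (h : IsShuffle u v w) :
    SimonSingleton (pieceH u + v.length) w := by
  induction v generalizing u w with
  | nil => rw [h.eq_of_nil_right]; exact simonSingleton_pieceH u
  | cons b v ih =>
    obtain ⟨p, u', q, rfl, rfl, h'⟩ := h.exists_of_cons_right
    exact (ih (h'.append_left p)).append_cons b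

end IsShuffle

end

theorem stmt16_general {A : Type*} (u v w : List A)
    (hw : IsShuffle u v w) :
    pieceH w ≤ pieceH u + v.length :=
  pieceH_le hw.simonSingleton_pieceH_add_length

theorem stmt16 {A : Type*} [Fintype A] [Nonempty A] (u v w : List A)
    (hw : IsShuffle u v w) :
    pieceH w ≤ pieceH u + v.length :=
  stmt16_general u v w hw
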